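/- Let d be a dense database of range size N. Then the elementary volumes v(1,1), v(1,2), …, v(1,N) are N pairwise distinct vertices of the exact-volume graph G that are pairwise adjacent; that is, they form a clique of size N in G. (For 1 ≤ i < j ≤ N the witnessing third volume is v(i+1,j) ∈ V, since v(1,j) = v(1,i) + v(i+1,j).) -/

import Mathlib

/-- The volume of the range `[a,b]` of a database `d`. -/
def dbVol (d : ℕ → ℕ) (a b : ℕ) : ℕ := ∑ k ∈ Finset.Icc a b, d k

/-- The set of all range-query volumes of a database of range size `N`. -/
def volSet (d : ℕ → ℕ) (N : ℕ) : Set ℕ :=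
  {x | ∃ a b, 1 ≤ a ∧ a ≤ b ∧ b ≤ N ∧ x = dbVol d a b}

/-- The exact-volume graph on a set `V` of volumes: distinct `u, w ∈ V` are
adjacent iff there is `z ∈ V` with `u = w + z` or `w = u + z`. -/
def exactGraph (V : Set ℕ) : SimpleGraph ℕ where
  Adj u w := u ≠ w ∧ u ∈ V ∧ w ∈ V ∧ ∃ z ∈ V, u = w + z ∨ w = u + z
  symm := by
    constructor
    rintro u w ⟨h1, h2, h3, z, hz, h4⟩
    exact ⟨h1.symm, h3, h2, z, hz, h4.symm⟩
  loopless := by constructor; rintro u ⟨h, _⟩; exact h rfl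

lemma dbVol_add_dbVol {d : ℕ → ℕ} {a i j : ℕ} (hai : a ≤ i + 1) (hij : i ≤ j) :
    dbVol d a i + dbVol d (i + 1) j = dbVol d a j := by
  simp only [dbVol, ← Finset.Ico_add_one_right_eq_Icc]
  exact Finset.sum_Ico_consecutive d hai (Nat.add_le_add_right hij 1)

lemma dbVol_pos_of_pos_right {d : ℕ → ℕ} {a b : ℕ} (hab : a ≤ b) (hb : 0 < d b) :
    0 < dbVol d a b :=
  hb.trans_le <| Finset.single_le_sum (fun k _ => Nat.zero_le (d k))
    (Finset.mem_Icc.mpr ⟨hab, le_rfl⟩)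

lemma dbVol_mem_volSet {d : ℕ → ℕ} {N a b : ℕ} (ha : 1 ≤ a) (hab : a ≤ b) (hb : b ≤ N) :
    dbVol d a b ∈ volSet d N :=
  ⟨a, b, ha, hab, hb, rfl⟩

section Dense

variable {N : ℕ} {d : ℕ → ℕ}

lemma strictMonoOn_dbVol_one (hdense : ∀ k, 1 ≤ k → k ≤ N → 1 ≤ d k) :
    StrictMonoOn (dbVol d 1) (Set.Icc 1 N) := by
  rintro i ⟨hi, -⟩ j ⟨-, hj⟩ hij
  rw [← dbVol_add_dbVol (by omega) hij.le]
  exact Nat.lt_add_of_pos_right (dbVol_pos_of_pos_right hij (hdense j (by omega) hj))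

lemma exactGraph_adj_dbVol_one (hdense : ∀ k, 1 ≤ k → k ≤ N → 1 ≤ d k) {i j : ℕ}
    (hi : 1 ≤ i) (hij : i < j) (hj : j ≤ N) :
    (exactGraph (volSet d N)).Adj (dbVol d 1 i) (dbVol d 1 j) :=
  ⟨(strictMonoOn_dbVol_one hdense ⟨hi, by omega⟩ ⟨by omega, hj⟩ hij).ne,
    dbVol_mem_volSet le_rfl hi (by omega), dbVol_mem_volSet le_rfl (by omega) hj,
    dbVol d (i + 1) j, dbVol_mem_volSet (Nat.le_add_left 1 i) hij hj,
    Or.inr (dbVol_add_dbVol (by omega) hij.le).symm⟩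

end Dense

theorem stmt_1_general (N : ℕ) (d : ℕ → ℕ)
    (hdense : ∀ k, 1 ≤ k → k ≤ N → 1 ≤ d k) :
    (∀ i, 1 ≤ i → i ≤ N → dbVol d 1 i ∈ volSet d N) ∧
    (exactGraph (volSet d N)).IsNClique N
      ((Finset.Icc 1 N).image (fun i => dbVol d 1 i)) := by
  have hinj : Set.InjOn (dbVol d 1) (Set.Icc 1 N) := (strictMonoOn_dbVol_one hdense).injOn
  refine ⟨fun i hi hiN => dbVol_mem_volSet le_rfl hi hiN, ?_, ?_⟩
  · rw [Finset.coe_image, Finset.coe_Icc]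
    refine hinj.pairwise_image.mpr ?_
    intro i ⟨hi, hiN⟩ j ⟨hj, hjN⟩ hij
    rcases hij.lt_or_gt with hlt | hgt
    · exact exactGraph_adj_dbVol_one hdense hi hlt hjN
    · exact (exactGraph_adj_dbVol_one hdense hj hgt hiN).symm
  · rw [Finset.card_image_of_injOn (by rwa [Finset.coe_Icc]), Nat.card_Icc, Nat.add_sub_cancel]

/-- For a dense database, the `N` elementary volumes `v(1,1), …, v(1,N)` are
vertices of the exact-volume graph forming a clique of size `N`. -/
theorem stmt_1 (N : ℕ) (hN : 1 ≤ N) (d : ℕ → ℕ)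
    (hdense : ∀ k, 1 ≤ k → k ≤ N → 1 ≤ d k) :
    (∀ i, 1 ≤ i → i ≤ N → dbVol d 1 i ∈ volSet d N) ∧
    (exactGraph (volSet d N)).IsNClique N
      ((Finset.Icc 1 N).image (fun i => dbVol d 1 i)) :=
  stmt_1_general N d hdense
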